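/- Let R be a standard Young tableau of skew shape λ/μ with n cells, and let 1 ≤ k′ ≤ k ≤ n. If the set {n−1,…,n−k+1} satisfies properties (i) and (ii) in R, then the set {n−1,…,n−k′+1} also satisfies properties (i) and (ii) in R. In other words, properties (i) and (ii) become more restrictive as k increases, so the values of k for which they hold form an initial segment. -/

import Mathlib

/-!
Common definitions for skew shapes, standard Young tableaux, the southeast
boundary, southeast min-unimodal sets, the southeast rotation `Rot_SE`,
balance, balance points, and the map `Θ`, following the paper.

Cells are pairs `(i, j) : ℕ × ℕ` (row `i` counted from the top, column `j`
counted from the left).  South means larger row index, east means larger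
column index.
-/

open scoped Classical

namespace SkewSE

abbrev Cell : Type := ℕ × ℕ

/-- `a` is weakly southwest of `b`: weakly south (row ≥) and weakly west (col ≤). -/
def weakSW (a b : Cell) : Prop := b.1 ≤ a.1 ∧ a.2 ≤ b.2

/-- `a` is strictly southwest of `b`: strictly south and strictly west. -/
def strictSW (a b : Cell) : Prop := b.1 < a.1 ∧ a.2 < b.2

/-- The (strict) southwest-to-northeast order on cells:
`a` comes before `b` if `a` is weakly southwest of `b` and `a ≠ b`. -/
def swLT (a b : Cell) : Prop := weakSW a b ∧ a ≠ b

/-- Two cells are adjacent if they share an edge. -/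
def adjacent (a b : Cell) : Prop :=
  (a.1 = b.1 ∧ (a.2 = b.2 + 1 ∨ b.2 = a.2 + 1)) ∨
  (a.2 = b.2 ∧ (a.1 = b.1 + 1 ∨ b.1 = a.1 + 1))

/-- `a` and `b` lie in the same connected component of the set of cells `P`
(with respect to edge-adjacency). -/
def sameComp (P : Finset Cell) (a b : Cell) : Prop :=
  a ∈ P ∧ b ∈ P ∧ Relation.ReflTransGen (fun x y => x ∈ P ∧ y ∈ P ∧ adjacent x y) a b

/-- The cells of the skew shape `λ/μ`. -/
def skewCells (lam mu : YoungDiagram) : Finset Cell := lam.cells \ mu.cells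

/-- `n = |λ/μ|`, the number of cells. -/
def numCells (lam mu : YoungDiagram) : ℕ := (skewCells lam mu).card

/-- A set of cells is a skew shape if it is the difference of two Young diagrams. -/
def IsSkewShape (P : Finset Cell) : Prop :=
  ∃ lam' mu' : YoungDiagram, mu' ≤ lam' ∧ P = lam'.cells \ mu'.cells

/-- A standard Young tableau of skew shape `λ/μ`: a bijective filling of the
cells by `{1,…,n}`, strictly increasing west-to-east along rows and
north-to-south down columns.  (Entries are `0` off the shape.) -/
structure SYT (lam mu : YoungDiagram) where
  entry : Cell → ℕ
  bijOn : Set.BijOn entry (skewCells lam mu : Set Cell)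
    ((Finset.Icc 1 (numCells lam mu) : Finset ℕ) : Set ℕ)
  row_lt : ∀ i j : ℕ, (i, j) ∈ skewCells lam mu → (i, j + 1) ∈ skewCells lam mu →
    entry (i, j) < entry (i, j + 1)
  col_lt : ∀ i j : ℕ, (i, j) ∈ skewCells lam mu → (i + 1, j) ∈ skewCells lam mu →
    entry (i, j) < entry (i + 1, j)
  zero_outside : ∀ c : Cell, c ∉ skewCells lam mu → entry c = 0

variable {lam mu : YoungDiagram}

/-- `pos T x` is the cell of `T` containing the entry `x`. -/
noncomputable def pos (T : SYT lam mu) (x : ℕ) : Cell :=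
  if h : ∃ c ∈ skewCells lam mu, T.entry c = x then h.choose else (0, 0)

/-- The southeast boundary of `λ/μ`: cells `(i,j)` with `(i+1, j+1) ∉ λ/μ`. -/
def SEboundary (lam mu : YoungDiagram) : Finset Cell :=
  (skewCells lam mu).filter (fun c => (c.1 + 1, c.2 + 1) ∉ skewCells lam mu)

/-- `S` is southeast min-unimodal in `T`: the cells `pos_T(S)` lie on the
southeast boundary, in a single connected component of `λ/μ`, are totally
ordered southwest-to-northeast, and the entries, read in the
southwest-to-northeast order of their cells, strictly decrease until
reaching `min S` and then strictly increase. -/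
def MinUnimodalSE (T : SYT lam mu) (S : Finset ℕ) : Prop :=
  ∃ hne : S.Nonempty,
    S ⊆ Finset.Icc 1 (numCells lam mu) ∧
    (∀ x ∈ S, pos T x ∈ SEboundary lam mu) ∧
    (∀ x ∈ S, ∀ y ∈ S, sameComp (skewCells lam mu) (pos T x) (pos T y)) ∧
    (∀ x ∈ S, ∀ y ∈ S, weakSW (pos T x) (pos T y) ∨ weakSW (pos T y) (pos T x)) ∧
    (∀ x ∈ S, ∀ y ∈ S, swLT (pos T x) (pos T y) →
      (weakSW (pos T y) (pos T (S.min' hne)) → y < x) ∧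
      (weakSW (pos T (S.min' hne)) (pos T x) → x < y))

/-- `k` such that `Rc_SE(T) = {n-k+1, …, n}`: the maximal `k ≥ 1` for which
this set is southeast min-unimodal in `T`. -/
noncomputable def kSE (T : SYT lam mu) : ℕ :=
  sSup {k : ℕ | 1 ≤ k ∧ k ≤ numCells lam mu ∧
    MinUnimodalSE T (Finset.Icc (numCells lam mu - k + 1) (numCells lam mu))}

/-- `Rc_SE(T) = {n-k+1, …, n}` with `k` maximal as above. -/
noncomputable def RcSE (T : SYT lam mu) : Finset ℕ :=
  Finset.Icc (numCells lam mu - kSE T + 1) (numCells lam mu)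

/-- `Rp_SE(T) = pos_T(Rc_SE(T))`. -/
noncomputable def RpSE (T : SYT lam mu) : Finset Cell := (RcSE T).image (pos T)

/-- `Y = pos_T(min Rc_SE(T))`. -/
noncomputable def Ycell (T : SYT lam mu) : Cell :=
  pos T (numCells lam mu - kSE T + 1)

/-- The position of the largest entry `n`. -/
noncomputable def posN (T : SYT lam mu) : Cell := pos T (numCells lam mu)

/-- `pos_T(n)` is the southwesternmost cell of `Rp_SE(T)`. -/
def SWmostAtN (T : SYT lam mu) : Prop := ∀ c ∈ RpSE T, weakSW (posN T) c

/-- `pos_T(n)` is the northeasternmost cell of `Rp_SE(T)`. -/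
def NEmostAtN (T : SYT lam mu) : Prop := ∀ c ∈ RpSE T, weakSW c (posN T)

/-- The southernmost cell of `P` in the column of `Y`. -/
noncomputable def southEnd (P : Finset Cell) (Y : Cell) : Cell :=
  if h : ∃ c ∈ P, c.2 = Y.2 ∧ ∀ d ∈ P, d.2 = Y.2 → d.1 ≤ c.1 then h.choose else Y

/-- The easternmost cell of `P` in the row of `Y`. -/
noncomputable def eastEnd (P : Finset Cell) (Y : Cell) : Cell :=
  if h : ∃ c ∈ P, c.1 = Y.1 ∧ ∀ d ∈ P, d.1 = Y.1 → d.2 ≤ c.2 then h.choose else Y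

/-- The southeast rotation endpoint `X` of `T`. -/
noncomputable def Xend (T : SYT lam mu) : Cell :=
  if SWmostAtN T then
    if ∃ c ∈ RpSE T, c.2 = (Ycell T).2 ∧ (Ycell T).1 < c.1 then
      southEnd (RpSE T) (Ycell T)
    else eastEnd (RpSE T) (Ycell T)
  else
    if ∃ c ∈ RpSE T, c.1 = (Ycell T).1 ∧ (Ycell T).2 < c.2 then
      eastEnd (RpSE T) (Ycell T)
    else southEnd (RpSE T) (Ycell T)

/-- The cells `Z_1, …, Z_j` of `Rp_SE(T)` lying weakly between `pos_T(n)`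
and `X` in the southwest-to-northeast order. -/
noncomputable def chainSE (T : SYT lam mu) : Finset Cell :=
  (RpSE T).filter (fun c =>
    (weakSW (posN T) c ∧ weakSW c (Xend T)) ∨ (weakSW (Xend T) c ∧ weakSW c (posN T)))

/-- The next cell of `P` after `c` in southwest-to-northeast order. -/
noncomputable def nextNE (P : Finset Cell) (c : Cell) : Cell :=
  if h : ∃ d ∈ P, swLT c d ∧ ∀ e ∈ P, swLT c e → weakSW d e then h.choose else c

/-- The next cell of `P` before `c` in southwest-to-northeast order. -/
noncomputable def nextSW (P : Finset Cell) (c : Cell) : Cell :=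
  if h : ∃ d ∈ P, swLT d c ∧ ∀ e ∈ P, swLT e c → weakSW e d then h.choose else c

/-- The filling `Rot_SE(T)` produced by the southeast rotation:
`n` moves to `X`, and the entries of the cells of `Rp_SE(T)` weakly between
`pos_T(n)` and `X` are each shifted one position towards `pos_T(n)`;
all other entries are unchanged. -/
noncomputable def rotEntry (T : SYT lam mu) (c : Cell) : ℕ :=
  if c ∈ chainSE T then
    if c = Xend T then numCells lam mu
    else if SWmostAtN T then T.entry (nextNE (chainSE T) c)
    else T.entry (nextSW (chainSE T) c)
  else T.entry c

/-- The southeast rotation as a map `SYT(λ/μ) → SYT(λ/μ)`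
(well-defined since the rotated filling is again standard). -/
noncomputable def RotSE (T : SYT lam mu) : SYT lam mu :=
  if h : ∃ R : SYT lam mu, R.entry = rotEntry T then h.choose else T

/-- The descent set `Des(T) = {i : pos_T(i+1) is strictly south of pos_T(i)}`. -/
noncomputable def Des (T : SYT lam mu) : Finset ℕ :=
  (Finset.Icc 1 (numCells lam mu - 1)).filter
    (fun i => (pos T i).1 < (pos T (i + 1)).1)

/-- `S` is balanced with respect to `W` in `U`: the entries in the cells of
`pos_U(S)` weakly northeast of `W` increase from southwest to northeast, and
the entries in the cells of `pos_U(S)` weakly southwest of `W` increase from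
northeast to southwest. -/
def Balanced (U : SYT lam mu) (S : Finset ℕ) (W : Cell) : Prop :=
  (∀ x ∈ S, ∀ y ∈ S, weakSW W (pos U x) → weakSW W (pos U y) →
    swLT (pos U x) (pos U y) → x < y) ∧
  (∀ x ∈ S, ∀ y ∈ S, weakSW (pos U x) W → weakSW (pos U y) W →
    swLT (pos U y) (pos U x) → x < y)

/-- `a` and `b` are distinct and consecutive in the southwest-to-northeast
order on the set of cells `Q`. -/
def consecutiveIn (Q : Finset Cell) (a b : Cell) : Prop :=
  a ∈ Q ∧ b ∈ Q ∧ (swLT a b ∨ swLT b a) ∧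
  ∀ c ∈ Q, ¬ (swLT a c ∧ swLT c b) ∧ ¬ (swLT b c ∧ swLT c a)

/-- The northern balance point of a southeast exterior corner `Z`: the cell
of the southeast boundary weakly due north of `Z` farthest from `Z`. -/
noncomputable def northBP (lam mu : YoungDiagram) (Z : Cell) : Cell :=
  if h : ∃ c ∈ SEboundary lam mu, c.2 = Z.2 ∧ c.1 ≤ Z.1 ∧
      ∀ d ∈ SEboundary lam mu, d.2 = Z.2 → d.1 ≤ Z.1 → c.1 ≤ d.1
  then h.choose else Z

/-- The western balance point of a southeast exterior corner `Z`: the cell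
of the southeast boundary weakly due west of `Z` farthest from `Z`. -/
noncomputable def westBP (lam mu : YoungDiagram) (Z : Cell) : Cell :=
  if h : ∃ c ∈ SEboundary lam mu, c.1 = Z.1 ∧ c.2 ≤ Z.2 ∧
      ∀ d ∈ SEboundary lam mu, d.1 = Z.1 → d.2 ≤ Z.2 → c.2 ≤ d.2
  then h.choose else Z

/-- Property (i) for `S = {n-1, …, n-k+1}` in `R`:
`S` is southeast min-unimodal in `R` and lies in the same connected
component of `λ/μ` as `pos_R(n)` (vacuous when `S` is empty, i.e. `k = 1`). -/
def PropI (R : SYT lam mu) (k : ℕ) : Prop :=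
  (Finset.Icc (numCells lam mu - k + 1) (numCells lam mu - 1)).Nonempty →
    MinUnimodalSE R (Finset.Icc (numCells lam mu - k + 1) (numCells lam mu - 1)) ∧
    ∀ x ∈ Finset.Icc (numCells lam mu - k + 1) (numCells lam mu - 1),
      sameComp (skewCells lam mu) (pos R x) (pos R (numCells lam mu))

/-- `pos_R(S)` contains the northern neighbor of `pos_R(n)`,
for `S = {n-1, …, n-k+1}`. -/
def hasNorthNbr (R : SYT lam mu) (k : ℕ) : Prop :=
  ∃ x ∈ Finset.Icc (numCells lam mu - k + 1) (numCells lam mu - 1),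
    (pos R x).2 = (pos R (numCells lam mu)).2 ∧
    (pos R x).1 + 1 = (pos R (numCells lam mu)).1

/-- `pos_R(S)` contains the western neighbor of `pos_R(n)`,
for `S = {n-1, …, n-k+1}`. -/
def hasWestNbr (R : SYT lam mu) (k : ℕ) : Prop :=
  ∃ x ∈ Finset.Icc (numCells lam mu - k + 1) (numCells lam mu - 1),
    (pos R x).1 = (pos R (numCells lam mu)).1 ∧
    (pos R x).2 + 1 = (pos R (numCells lam mu)).2

/-- Property (ii) for `S = {n-1, …, n-k+1}` in `R`. -/
def PropII (R : SYT lam mu) (k : ℕ) : Prop :=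
  ¬ (hasNorthNbr R k ∧ hasWestNbr R k) ∧
  (hasNorthNbr R k →
    Balanced R (Finset.Icc (numCells lam mu - k + 1) (numCells lam mu - 1))
      (northBP lam mu (pos R (numCells lam mu)))) ∧
  (hasWestNbr R k →
    Balanced R (Finset.Icc (numCells lam mu - k + 1) (numCells lam mu - 1))
      (westBP lam mu (pos R (numCells lam mu)))) ∧
  (¬ hasNorthNbr R k → ¬ hasWestNbr R k →
    Balanced R (Finset.Icc (numCells lam mu - k + 1) (numCells lam mu - 1))
      (northBP lam mu (pos R (numCells lam mu))) ∧
    Balanced R (Finset.Icc (numCells lam mu - k + 1) (numCells lam mu - 1))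
      (westBP lam mu (pos R (numCells lam mu))))

/-- The maximal `k` such that `S = {n-1, …, n-k+1}` satisfies properties
(i) and (ii) in `R`; used to define `Θ`. -/
noncomputable def kTheta (R : SYT lam mu) : ℕ :=
  sSup {k : ℕ | 1 ≤ k ∧ k ≤ numCells lam mu ∧ PropI R k ∧ PropII R k}

/-- The southwesternmost cell of `P`. -/
noncomputable def SWend (P : Finset Cell) : Cell :=
  if h : ∃ c ∈ P, ∀ d ∈ P, weakSW c d then h.choose else (0, 0)

/-- The northeasternmost cell of `P`. -/
noncomputable def NEend (P : Finset Cell) : Cell :=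
  if h : ∃ c ∈ P, ∀ d ∈ P, weakSW d c then h.choose else (0, 0)

/-- `P = pos_R({n, …, n-k+1})` for `k = kTheta R`. -/
noncomputable def PTheta (R : SYT lam mu) : Finset Cell :=
  (Finset.Icc (numCells lam mu - kTheta R + 1) (numCells lam mu)).image (pos R)

/-- `pos_R(n - k + 1)` for `k = kTheta R`. -/
noncomputable def posMTheta (R : SYT lam mu) : Cell :=
  pos R (numCells lam mu - kTheta R + 1)

/-- `Θ` moves `n` to the southwestern end exactly when: `pos_R(n)` and
`pos_R(n-k+1)` lie in different connected components of `P` and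
`pos_R(n-k+1)` is on the southwestern side, or they lie in the same
connected component and `pos_R(n-k+1)` is on the northeastern side. -/
def destIsSW (R : SYT lam mu) : Prop :=
  weakSW (posMTheta R) (posN R) ↔ ¬ sameComp (PTheta R) (posN R) (posMTheta R)

/-- The destination cell for `n` under `Θ`. -/
noncomputable def destTheta (R : SYT lam mu) : Cell :=
  if destIsSW R then SWend (PTheta R) else NEend (PTheta R)

/-- The cells of `P` weakly between the destination cell and `pos_R(n)`. -/
noncomputable def chainTheta (R : SYT lam mu) : Finset Cell :=
  (PTheta R).filter (fun c =>
    (weakSW (destTheta R) c ∧ weakSW c (posN R)) ∨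
    (weakSW (posN R) c ∧ weakSW c (destTheta R)))

/-- The filling `Θ(R)`: `n` moves from `pos_R(n)` to the destination cell,
and each entry occupying a cell of `P` strictly between them is shifted one
position in `P` closer to `pos_R(n)`; all other entries are unchanged. -/
noncomputable def thetaEntry (R : SYT lam mu) (c : Cell) : ℕ :=
  if c ∈ chainTheta R then
    if c = destTheta R then numCells lam mu
    else if destIsSW R then R.entry (nextSW (chainTheta R) c)
    else R.entry (nextNE (chainTheta R) c)
  else R.entry c

/-- The map `Θ` as a map on standard Young tableaux. -/
noncomputable def Theta (R : SYT lam mu) : SYT lam mu :=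
  if h : ∃ U : SYT lam mu, U.entry = thetaEntry R then h.choose else R

/-- A single-column rectangle with northern endpoint `Y` and southern endpoint `X`. -/
def IsColSeg (P : Finset Cell) (Y X : Cell) : Prop :=
  Y.2 = X.2 ∧ Y.1 ≤ X.1 ∧ P = (Finset.Icc Y.1 X.1).image (fun i => (i, Y.2))

/-- A single-row rectangle with western endpoint `Y` and eastern endpoint `X`. -/
def IsRowSeg (P : Finset Cell) (Y X : Cell) : Prop :=
  Y.1 = X.1 ∧ Y.2 ≤ X.2 ∧ P = (Finset.Icc Y.2 X.2).image (fun j => (Y.1, j))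

/-- A hook with northwestern corner `Y`, southern endpoint `A`, and eastern
endpoint `B` (both arms of positive length). -/
def IsHook (P : Finset Cell) (Y A B : Cell) : Prop :=
  A.2 = Y.2 ∧ Y.1 < A.1 ∧ B.1 = Y.1 ∧ Y.2 < B.2 ∧
  P = (Finset.Icc Y.1 A.1).image (fun i => (i, Y.2)) ∪
      (Finset.Icc Y.2 B.2).image (fun j => (Y.1, j))

end SkewSE

/-!
Property (i) passes to subsets once min-unimodality is read as "no entry of `S` exceeds both of
its neighbours in the southwest-to-northeast order". In property (ii) the neighbour conditions
only weaken and balance passes to subsets, except when `S_k` contains a neighbour `e` of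
`pos_R(n)` while `S_{k'}` contains neither; then balance at the other balance point has to be
derived. A boundary cell of `S_{k'}` weakly northwest of `pos_R(n)` would force a neighbour of
`pos_R(n)` into `S_{k'}`, so the relevant cells of `S_{k'}` lie beyond `pos_R(e)`, where the
entries increase since `e < min S_{k'}`.
-/

namespace SkewSE

variable {lam mu : YoungDiagram}

lemma weakSW_trans {a b c : Cell} (hab : weakSW a b) (hbc : weakSW b c) : weakSW a c :=
  ⟨hbc.1.trans hab.1, hab.2.trans hbc.2⟩

lemma mem_skewCells_of_le_of_le {a b c : Cell} (ha : a ∈ skewCells lam mu)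
    (hb : b ∈ skewCells lam mu) (hac : a ≤ c) (hcb : c ≤ b) : c ∈ skewCells lam mu := by
  simp only [skewCells, Finset.mem_sdiff] at *
  exact ⟨lam.isLowerSet hcb hb.1, fun hc => ha.2 (mu.isLowerSet hac hc)⟩

lemma notMem_skewCells_of_mem_SEboundary {c d : Cell} (hc : c ∈ SEboundary lam mu)
    (h₁ : c.1 < d.1) (h₂ : c.2 < d.2) : d ∉ skewCells lam mu := by
  intro hd
  obtain ⟨hc, hdiag⟩ := Finset.mem_filter.mp hc
  exact hdiag (mem_skewCells_of_le_of_le hc hd ⟨by simp, by simp⟩ ⟨h₁, h₂⟩)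

section SYT

variable (R : SYT lam mu)

lemma SYT.entry_mem_Icc {c : Cell} (hc : c ∈ skewCells lam mu) :
    R.entry c ∈ Finset.Icc 1 (numCells lam mu) := by
  exact_mod_cast R.bijOn.mapsTo (by exact_mod_cast hc)

lemma pos_mem_skewCells_and_entry_pos {x : ℕ} (hx : x ∈ Finset.Icc 1 (numCells lam mu)) :
    pos R x ∈ skewCells lam mu ∧ R.entry (pos R x) = x := by
  have h : ∃ c ∈ skewCells lam mu, R.entry c = x := by
    obtain ⟨c, hc, hcx⟩ := R.bijOn.surjOn (by exact_mod_cast hx)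
    exact ⟨c, by exact_mod_cast hc, hcx⟩
  rw [pos, dif_pos h]
  exact h.choose_spec

lemma pos_mem_skewCells {x : ℕ} (hx : x ∈ Finset.Icc 1 (numCells lam mu)) :
    pos R x ∈ skewCells lam mu :=
  (pos_mem_skewCells_and_entry_pos R hx).1

lemma entry_pos {x : ℕ} (hx : x ∈ Finset.Icc 1 (numCells lam mu)) : R.entry (pos R x) = x :=
  (pos_mem_skewCells_and_entry_pos R hx).2

lemma pos_injOn : Set.InjOn (pos R) (Finset.Icc 1 (numCells lam mu)) := fun x hx y hy h => by
  rw [← entry_pos R hx, ← entry_pos R hy, h]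

lemma pos_entry {c : Cell} (hc : c ∈ skewCells lam mu) : pos R (R.entry c) = c :=
  R.bijOn.injOn (pos_mem_skewCells R (R.entry_mem_Icc hc)) hc (entry_pos R (R.entry_mem_Icc hc))

lemma SYT.entry_le_entry_of_row {i j j' : ℕ} (hj : j ≤ j') (h : (i, j) ∈ skewCells lam mu)
    (h' : (i, j') ∈ skewCells lam mu) : R.entry (i, j) ≤ R.entry (i, j') := by
  induction j', hj using Nat.le_induction with
  | base => exact le_rfl
  | succ j' hjj' ih =>
    have hmid :=
      mem_skewCells_of_le_of_le (c := (i, j')) h h' ⟨le_rfl, hjj'⟩ ⟨le_rfl, j'.le_succ⟩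
    exact (ih hmid).trans (R.row_lt i j' hmid h').le

lemma SYT.entry_le_entry_of_col {i i' j : ℕ} (hi : i ≤ i') (h : (i, j) ∈ skewCells lam mu)
    (h' : (i', j) ∈ skewCells lam mu) : R.entry (i, j) ≤ R.entry (i', j) := by
  induction i', hi using Nat.le_induction with
  | base => exact le_rfl
  | succ i' hii' ih =>
    have hmid :=
      mem_skewCells_of_le_of_le (c := (i', j)) h h' ⟨hii', le_rfl⟩ ⟨i'.le_succ, le_rfl⟩
    exact (ih hmid).trans (R.col_lt i' j hmid h').le

lemma SYT.entry_le_entry {c d : Cell} (hc : c ∈ skewCells lam mu) (hd : d ∈ skewCells lam mu)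
    (hcd : c ≤ d) : R.entry c ≤ R.entry d := by
  have hcorner :=
    mem_skewCells_of_le_of_le (c := (c.1, d.2)) hc hd ⟨le_rfl, hcd.2⟩ ⟨hcd.1, le_rfl⟩
  exact (R.entry_le_entry_of_row hcd.2 hc hcorner).trans
    (R.entry_le_entry_of_col hcd.1 hcorner hd)

lemma SYT.entry_lt_entry {c d : Cell} (hc : c ∈ skewCells lam mu) (hd : d ∈ skewCells lam mu)
    (hcd : c < d) : R.entry c < R.entry d :=
  (R.entry_le_entry hc hd hcd.le).lt_of_ne fun h => hcd.ne (R.bijOn.injOn hc hd h)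

end SYT

section MinUnimodal

variable {R : SYT lam mu} {S T : Finset ℕ}

namespace MinUnimodalSE

lemma subset_Icc (h : MinUnimodalSE R S) : S ⊆ Finset.Icc 1 (numCells lam mu) := by
  obtain ⟨-, hS, -⟩ := h
  exact hS

lemma mem_SEboundary (h : MinUnimodalSE R S) {x : ℕ} (hx : x ∈ S) :
    pos R x ∈ SEboundary lam mu := by
  obtain ⟨-, -, hbd, -⟩ := h
  exact hbd x hx

lemma total (h : MinUnimodalSE R S) {x y : ℕ} (hx : x ∈ S) (hy : y ∈ S) :
    weakSW (pos R x) (pos R y) ∨ weakSW (pos R y) (pos R x) := by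
  obtain ⟨-, -, -, -, htot, -⟩ := h
  exact htot x hx y hy

lemma pos_ne (h : MinUnimodalSE R S) {x y : ℕ} (hx : x ∈ S) (hy : y ∈ S) (hxy : x ≠ y) :
    pos R x ≠ pos R y :=
  fun hpos => hxy (pos_injOn R (h.subset_Icc hx) (h.subset_Icc hy) hpos)

/-- Unlike the definition, which refers to `min S`, this form passes directly to subsets. -/
lemma not_peak (h : MinUnimodalSE R S) {a b c : ℕ} (ha : a ∈ S) (hb : b ∈ S) (hc : c ∈ S)
    (hab : swLT (pos R a) (pos R b)) (hbc : swLT (pos R b) (pos R c)) : b < a ∨ b < c := by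
  obtain ⟨hne, -, -, -, htot, huni⟩ := h
  rcases htot b hb _ (S.min'_mem hne) with hbm | hmb
  · exact Or.inl ((huni a ha b hb hab).1 hbm)
  · exact Or.inr ((huni b hb c hc hbc).2 hmb)

end MinUnimodalSE

lemma minUnimodalSE_of_not_peak (hne : S.Nonempty)
    (hS : S ⊆ Finset.Icc 1 (numCells lam mu))
    (hbd : ∀ x ∈ S, pos R x ∈ SEboundary lam mu)
    (hcomp : ∀ x ∈ S, ∀ y ∈ S, sameComp (skewCells lam mu) (pos R x) (pos R y))
    (htot : ∀ x ∈ S, ∀ y ∈ S, weakSW (pos R x) (pos R y) ∨ weakSW (pos R y) (pos R x))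
    (hpeak : ∀ a ∈ S, ∀ b ∈ S, ∀ c ∈ S,
      swLT (pos R a) (pos R b) → swLT (pos R b) (pos R c) → b < a ∨ b < c) :
    MinUnimodalSE R S := by
  have hm := S.min'_mem hne
  have hpos_ne : ∀ x ∈ S, x ≠ S.min' hne → pos R x ≠ pos R (S.min' hne) :=
    fun x hx hxm hpos => hxm (pos_injOn R (hS hx) (hS hm) hpos)
  refine ⟨hne, hS, hbd, hcomp, htot, fun x hx y hy hxy => ⟨fun hym => ?_, fun hmx => ?_⟩⟩
  · by_cases hy_m : y = S.min' hne
    · rw [hy_m]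
      exact (S.min'_le x hx).lt_of_ne fun h => hxy.2 (by rw [hy_m, h])
    · have := hpeak x hx y hy _ hm hxy ⟨hym, hpos_ne y hy hy_m⟩
      have := S.min'_le y hy
      omega
  · by_cases hx_m : x = S.min' hne
    · rw [hx_m]
      exact (S.min'_le y hy).lt_of_ne fun h => hxy.2 (by rw [hx_m, h])
    · have := hpeak _ hm x hx y hy ⟨hmx, (hpos_ne x hx hx_m).symm⟩ hxy
      have := S.min'_le x hx
      omega

lemma MinUnimodalSE.mono (h : MinUnimodalSE R S) (hTS : T ⊆ S) (hT : T.Nonempty) :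
    MinUnimodalSE R T := by
  obtain ⟨-, hS, hbd, hcomp, htot, -⟩ := id h
  exact minUnimodalSE_of_not_peak hT (hTS.trans hS) (fun x hx => hbd x (hTS hx))
    (fun x hx y hy => hcomp x (hTS hx) y (hTS hy)) (fun x hx y hy => htot x (hTS hx) y (hTS hy))
    (fun a ha b hb c hc => h.not_peak (hTS ha) (hTS hb) (hTS hc))

end MinUnimodal

lemma Balanced.mono {R : SYT lam mu} {S T : Finset ℕ} {W : Cell} (h : Balanced R S W)
    (hTS : T ⊆ S) : Balanced R T W :=
  ⟨fun x hx y hy => h.1 x (hTS hx) y (hTS hy), fun x hx y hy => h.2 x (hTS hx) y (hTS hy)⟩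

section BalancePoints

variable (Z : Cell)

lemma northBP_snd : (northBP lam mu Z).2 = Z.2 := by
  rw [northBP]
  split_ifs with h
  exacts [h.choose_spec.2.1, rfl]

lemma northBP_fst_le : (northBP lam mu Z).1 ≤ Z.1 := by
  rw [northBP]
  split_ifs with h
  exacts [h.choose_spec.2.2.1, le_rfl]

lemma westBP_fst : (westBP lam mu Z).1 = Z.1 := by
  rw [westBP]
  split_ifs with h
  exacts [h.choose_spec.2.1, rfl]

lemma westBP_snd_le : (westBP lam mu Z).2 ≤ Z.2 := by
  rw [westBP]
  split_ifs with h
  exacts [h.choose_spec.2.2.1, le_rfl]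

lemma weakSW_westBP_northBP : weakSW (westBP lam mu Z) (northBP lam mu Z) :=
  ⟨(westBP_fst Z).symm ▸ northBP_fst_le Z, (northBP_snd Z).symm ▸ westBP_snd_le Z⟩

end BalancePoints

/-- The cells of `S'` weakly northeast of `Ww` all lie strictly northeast of `pos e`, and by
unimodality the entries of `S` increase beyond the smaller entry `e`. -/
lemma balanced_west_of_north {R : SYT lam mu} {S S' : Finset ℕ} {e : ℕ} {Z Wn Ww : Cell}
    (hS : MinUnimodalSE R S) (hS'S : S' ⊆ S) (he : e ∈ S) (he_lt : ∀ x ∈ S', e < x)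
    (he_col : (pos R e).2 ≤ Z.2) (hNW : ∀ x ∈ S', ¬ pos R x ≤ Z)
    (hWw : Ww.1 ≤ Z.1) (hWW : weakSW Ww Wn) (hBal : Balanced R S Wn) :
    Balanced R S' Ww := by
  constructor
  · intro x hx y hy hWx _ hxy
    have hex : swLT (pos R e) (pos R x) := by
      rcases hS.total he (hS'S hx) with h | h
      · exact ⟨h, hS.pos_ne he (hS'S hx) (he_lt x hx).ne⟩
      · exact absurd ⟨hWx.1.trans hWw, h.2.trans he_col⟩ (hNW x hx)
    have := hS.not_peak he (hS'S hx) (hS'S hy) hex hxy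
    have := he_lt x hx
    omega
  · intro x hx y hy hxW hyW hyx
    exact hBal.2 x (hS'S hx) y (hS'S hy) (weakSW_trans hxW hWW) (weakSW_trans hyW hWW) hyx

lemma balanced_north_of_west {R : SYT lam mu} {S S' : Finset ℕ} {e : ℕ} {Z Wn Ww : Cell}
    (hS : MinUnimodalSE R S) (hS'S : S' ⊆ S) (he : e ∈ S) (he_lt : ∀ x ∈ S', e < x)
    (he_row : (pos R e).1 ≤ Z.1) (hNW : ∀ x ∈ S', ¬ pos R x ≤ Z)
    (hWn : Wn.2 ≤ Z.2) (hWW : weakSW Ww Wn) (hBal : Balanced R S Ww) :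
    Balanced R S' Wn := by
  constructor
  · intro x hx y hy hWx hWy hxy
    exact hBal.1 x (hS'S hx) y (hS'S hy) (weakSW_trans hWW hWx) (weakSW_trans hWW hWy) hxy
  · intro x hx y hy hxW _ hyx
    have hxe : swLT (pos R x) (pos R e) := by
      rcases hS.total (hS'S hx) he with h | h
      · exact ⟨h, hS.pos_ne (hS'S hx) he (he_lt x hx).ne'⟩
      · exact absurd ⟨h.1.trans he_row, hxW.2.trans hWn⟩ (hNW x hx)
    have := hS.not_peak (hS'S hy) (hS'S hx) he hyx hxe
    have := he_lt x hx
    omega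

section Neighbours

variable {R : SYT lam mu} {k k' : ℕ}

local notation "S[" k "]" => Finset.Icc (numCells lam mu - k + 1) (numCells lam mu - 1)

lemma Icc_sub_add_one_subset {n : ℕ} (hk : k' ≤ k) :
    Finset.Icc (n - k' + 1) (n - 1) ⊆ Finset.Icc (n - k + 1) (n - 1) :=
  Finset.Icc_subset_Icc (by omega) le_rfl

lemma hasNorthNbr.mono (h : hasNorthNbr R k') (hk : k' ≤ k) : hasNorthNbr R k := by
  obtain ⟨x, hx, hpos⟩ := h
  exact ⟨x, Icc_sub_add_one_subset hk hx, hpos⟩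

lemma hasWestNbr.mono (h : hasWestNbr R k') (hk : k' ≤ k) : hasWestNbr R k := by
  obtain ⟨x, hx, hpos⟩ := h
  exact ⟨x, Icc_sub_add_one_subset hk hx, hpos⟩

/-- A cell of the southeast boundary weakly northwest of `pos_R(n)` is either in its row or
in its column, and then the neighbour of `pos_R(n)` in that direction lies between the two. -/
lemma hasNorthNbr_or_hasWestNbr_of_le_pos {x : ℕ} (hx : x ∈ S[k])
    (hbd : pos R x ∈ SEboundary lam mu) (hle : pos R x ≤ pos R (numCells lam mu)) :
    hasNorthNbr R k ∨ hasWestNbr R k := by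
  obtain ⟨hx₁, hx₂⟩ := Finset.mem_Icc.mp hx
  have hxI : x ∈ Finset.Icc 1 (numCells lam mu) := Finset.mem_Icc.mpr ⟨by omega, by omega⟩
  have hnI : numCells lam mu ∈ Finset.Icc 1 (numCells lam mu) :=
    Finset.mem_Icc.mpr ⟨by omega, le_rfl⟩
  obtain ⟨⟨i, j⟩, hZeq⟩ : ∃ Z, pos R (numCells lam mu) = Z := ⟨_, rfl⟩
  have hZ : (i, j) ∈ skewCells lam mu := hZeq ▸ pos_mem_skewCells R hnI
  have hc := pos_mem_skewCells R hxI
  have between : ∀ w : Cell, pos R x ≤ w → w < (i, j) → ∃ y ∈ S[k], pos R y = w := by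
    intro w hxw hwZ
    have hw := mem_skewCells_of_le_of_le hc hZ hxw hwZ.le
    have hxw' := R.entry_le_entry hc hw hxw
    have hwZ' := R.entry_lt_entry hw hZ hwZ
    rw [entry_pos R hxI] at hxw'
    rw [← hZeq, entry_pos R hnI] at hwZ'
    exact ⟨R.entry w, Finset.mem_Icc.mpr ⟨by omega, by omega⟩, pos_entry R hw⟩
  obtain ⟨⟨a, b⟩, hceq⟩ : ∃ c, pos R x = c := ⟨_, rfl⟩
  rw [hceq] at hbd between
  rw [hceq, hZeq] at hle
  obtain ⟨ha, hb⟩ := Prod.mk_le_mk.mp hle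
  rcases ha.lt_or_eq with ha | rfl <;> rcases hb.lt_or_eq with hb | rfl
  · exact absurd hZ (notMem_skewCells_of_mem_SEboundary hbd ha hb)
  · obtain ⟨y, hy, hpos⟩ := between (i - 1, b) (Prod.mk_le_mk.mpr ⟨by omega, le_rfl⟩)
      (Prod.mk_lt_mk.mpr (Or.inl ⟨by omega, le_rfl⟩))
    exact Or.inl ⟨y, hy, by rw [hpos, hZeq], by rw [hpos, hZeq]; dsimp only; omega⟩
  · obtain ⟨y, hy, hpos⟩ := between (a, j - 1) (Prod.mk_le_mk.mpr ⟨le_rfl, by omega⟩)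
      (Prod.mk_lt_mk.mpr (Or.inr ⟨le_rfl, by omega⟩))
    exact Or.inr ⟨y, hy, by rw [hpos, hZeq], by rw [hpos, hZeq]; dsimp only; omega⟩
  · have := pos_injOn R hxI hnI (hceq.trans hZeq.symm)
    omega

lemma PropI.mono (hI : PropI R k) (hk : k' ≤ k) : PropI R k' := fun hne => by
  have hsub := Icc_sub_add_one_subset (n := numCells lam mu) hk
  obtain ⟨hMU, hcomp⟩ := hI (hne.mono hsub)
  exact ⟨hMU.mono hsub hne, fun x hx => hcomp x (hsub hx)⟩

lemma balanced_of_not_hasNorthNbr_of_not_hasWestNbr (hI : PropI R k) (hII : PropII R k)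
    (hk : k' ≤ k) (hN : ¬ hasNorthNbr R k') (hW : ¬ hasWestNbr R k') :
    Balanced R S[k'] (northBP lam mu (pos R (numCells lam mu))) ∧
      Balanced R S[k'] (westBP lam mu (pos R (numCells lam mu))) := by
  obtain ⟨-, hNb, hWb, hneither⟩ := hII
  have hsub := Icc_sub_add_one_subset (n := numCells lam mu) hk
  have hNW : ∀ x ∈ S[k'], ¬ pos R x ≤ pos R (numCells lam mu) := fun x hx hle =>
    (hasNorthNbr_or_hasWestNbr_of_le_pos hx
      (((hI.mono hk) ⟨x, hx⟩).1.mem_SEboundary hx) hle).elim hN hW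
  have lt_of_notMem : ∀ e ∈ S[k], e ∉ S[k'] → ∀ x ∈ S[k'], e < x := by
    intro e he he' x hx
    simp only [Finset.mem_Icc] at he he' hx
    omega
  by_cases hNk : hasNorthNbr R k
  · obtain ⟨e, he, he_col, he_row⟩ := id hNk
    have he' : e ∉ S[k'] := fun he' => hN ⟨e, he', he_col, he_row⟩
    exact ⟨(hNb hNk).mono hsub, balanced_west_of_north (hI ⟨e, he⟩).1 hsub he
      (lt_of_notMem e he he') he_col.le hNW (westBP_fst _).le (weakSW_westBP_northBP _)
      (hNb hNk)⟩
  by_cases hWk : hasWestNbr R k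
  · obtain ⟨e, he, he_row, he_col⟩ := id hWk
    have he' : e ∉ S[k'] := fun he' => hW ⟨e, he', he_row, he_col⟩
    exact ⟨balanced_north_of_west (hI ⟨e, he⟩).1 hsub he (lt_of_notMem e he he') he_row.le
      hNW (northBP_snd _).le (weakSW_westBP_northBP _) (hWb hWk), (hWb hWk).mono hsub⟩
  obtain ⟨hbN, hbW⟩ := hneither hNk hWk
  exact ⟨hbN.mono hsub, hbW.mono hsub⟩

lemma PropII.mono (hII : PropII R k) (hI : PropI R k) (hk : k' ≤ k) : PropII R k' := by
  obtain ⟨hboth, hNb, hWb, -⟩ := id hII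
  have hsub := Icc_sub_add_one_subset (n := numCells lam mu) hk
  exact ⟨fun h => hboth ⟨h.1.mono hk, h.2.mono hk⟩, fun h => (hNb (h.mono hk)).mono hsub,
    fun h => (hWb (h.mono hk)).mono hsub,
    balanced_of_not_hasNorthNbr_of_not_hasWestNbr hI hII hk⟩

end Neighbours

theorem props_initial_segment_general (lam mu : YoungDiagram)
    (R : SYT lam mu) (k k' : ℕ) (h2 : k' ≤ k)
    (hI : PropI R k) (hII : PropII R k) :
    PropI R k' ∧ PropII R k' :=
  ⟨hI.mono h2, hII.mono hI h2⟩

/-- Properties (i) and (ii) become more restrictive as `k`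
increases: if `1 ≤ k' ≤ k ≤ n` and `{n-1, …, n-k+1}` satisfies properties
(i) and (ii) in `R`, then so does `{n-1, …, n-k'+1}`. -/
theorem props_initial_segment (lam mu : YoungDiagram) (hsub : mu ≤ lam)
    (R : SYT lam mu) (k k' : ℕ) (h1 : 1 ≤ k') (h2 : k' ≤ k)
    (h3 : k ≤ numCells lam mu) (hI : PropI R k) (hII : PropII R k) :
    PropI R k' ∧ PropII R k' :=
  props_initial_segment_general lam mu R k k' h2 hI hII

end SkewSE
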